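/- If X₁, ..., X_k are pairwise commuting 2N×2N complex matrices, each satisfying X_j* = X_j^♯, then there exists a single symplectic unitary U such that for all j, U* X_j U has block form [[T_j, S_j], [-conj(S_j), conj(T_j)]] with T_j upper-triangular and S_j strictly upper-triangular. -/

import Mathlib

open Matrix

noncomputable def Zmat (N : ℕ) : Matrix (Fin N ⊕ Fin N) (Fin N ⊕ Fin N) ℂ :=
  Matrix.fromBlocks 0 1 (-1) 0

noncomputable def dual {N : ℕ} (X : Matrix (Fin N ⊕ Fin N) (Fin N ⊕ Fin N) ℂ) :
    Matrix (Fin N ⊕ Fin N) (Fin N ⊕ Fin N) ℂ :=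
  -(Zmat N) * Xᵀ * (Zmat N)

noncomputable def Tmap {N : ℕ} (ξ : Fin N ⊕ Fin N → ℂ) : Fin N ⊕ Fin N → ℂ :=
  Sum.elim (fun i => -(starRingEnd ℂ) (ξ (Sum.inr i))) (fun i => (starRingEnd ℂ) (ξ (Sum.inl i)))

/-!
The map `J v = T v = -Z v̄` is antiunitary with `J² = -1`, and `X* = X^♯` says exactly that `X`
commutes with `J`. A unitary is symplectic iff its columns have the form
`e₁, …, e_N, J e₁, …, J e_N`. These are chosen one at a time, as in Schur's theorem: the span `K`
of the `e_p, J e_p` chosen so far is invariant under `J` and every `X_j`, so the maps induced by the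
`X_j` on `V / K` have a common eigenvector. Its component in `Kᗮ` is the next `e_q`, and `J e_q` is
in `Kᗮ` as well since `Kᗮ` is `J`-invariant. Then `X_j e_q ∈ μ e_q + K` and
`X_j (J e_q) = J (X_j e_q) ∈ μ̄ J e_q + K`, which is the claimed block-triangular shape.
-/

open Module Submodule
open scoped InnerProductSpace ComplexConjugate

section CommonEigenvector

attribute [local instance] LieRing.ofAssociativeRing

-- The family spans an abelian, hence nilpotent, Lie subalgebra of `End V`; a weight vector of it
-- is a common eigenvector.
theorem Module.End.exists_ne_zero_forall_apply_eq_smul_of_commute {ι V : Type*} [AddCommGroup V]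
    [Module ℂ V] [FiniteDimensional ℂ V] [Nontrivial V] (f : ι → Module.End ℂ V)
    (hf : ∀ i j, Commute (f i) (f j)) :
    ∃ v : V, v ≠ 0 ∧ ∀ i, ∃ μ : ℂ, f i v = μ • v := by
  let L := LieSubalgebra.lieSpan ℂ (Module.End ℂ V) (Set.range f)
  have : IsLieAbelian L := by
    rw [LieSubalgebra.isLieAbelian_lieSpan_iff]
    rintro _ ⟨i, rfl⟩ _ ⟨j, rfl⟩
    exact (hf i j).lie_eq
  obtain ⟨χ, hχ⟩ := LieModule.exists_nontrivial_weightSpace_of_isNilpotent ℂ L V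
  obtain ⟨⟨v, hv⟩, hv0⟩ := exists_ne (0 : LieModule.weightSpace V χ)
  have hfL (i : ι) : f i ∈ L := LieSubalgebra.subset_lieSpan ⟨i, rfl⟩
  exact ⟨v, by simpa using hv0, fun i => ⟨χ ⟨f i, hfL i⟩,
    (LieModule.mem_weightSpace _ _).mp hv ⟨f i, hfL i⟩⟩⟩

end CommonEigenvector

theorem Submodule.exists_notMem_forall_apply_sub_smul_mem {ι V : Type*} [AddCommGroup V]
    [Module ℂ V] [FiniteDimensional ℂ V] {K : Submodule ℂ V} (hK : K ≠ ⊤)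
    (f : ι → Module.End ℂ V) (hf : ∀ i j, Commute (f i) (f j)) (hfK : ∀ i, K ≤ K.comap (f i)) :
    ∃ v ∉ K, ∀ i, ∃ μ : ℂ, f i v - μ • v ∈ K := by
  have : Nontrivial (V ⧸ K) := Submodule.Quotient.nontrivial_iff.mpr hK
  have hfq (i j : ι) : Commute (K.mapQ K (f i) (hfK i)) (K.mapQ K (f j) (hfK j)) := by
    ext v
    simpa using congrArg K.mkQ (LinearMap.congr_fun (hf i j).eq v)
  obtain ⟨v', hv0, hv⟩ := Module.End.exists_ne_zero_forall_apply_eq_smul_of_commute _ hfq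
  obtain ⟨v, rfl⟩ := K.mkQ_surjective v'
  refine ⟨v, by simpa using hv0, fun i => ?_⟩
  obtain ⟨μ, hμ⟩ := hv i
  exact ⟨μ, (Submodule.Quotient.eq K).mp hμ⟩

variable {V : Type*} [NormedAddCommGroup V] [InnerProductSpace ℂ V]

theorem Submodule.exists_norm_eq_one_mem_orthogonal_forall_apply_sub_smul_mem {ι : Type*}
    [FiniteDimensional ℂ V] {K : Submodule ℂ V} (hK : K ≠ ⊤)
    (f : ι → Module.End ℂ V) (hf : ∀ i j, Commute (f i) (f j)) (hfK : ∀ i, K ≤ K.comap (f i)) :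
    ∃ ε ∈ Kᗮ, ‖ε‖ = 1 ∧ ∀ i, ∃ μ : ℂ, f i ε - μ • ε ∈ K := by
  obtain ⟨v, hvK, hv⟩ := K.exists_notMem_forall_apply_sub_smul_mem hK f hf hfK
  set w := v - K.starProjection v
  have hPv : K.starProjection v ∈ K := K.starProjection_apply_mem v
  have hw0 : w ≠ 0 := fun h => hvK (sub_eq_zero.mp h ▸ hPv)
  refine ⟨(‖w‖⁻¹ : ℂ) • w, smul_mem _ _ (K.sub_starProjection_mem_orthogonal v),
    norm_smul_inv_norm hw0, fun i => ?_⟩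
  obtain ⟨μ, hμ⟩ := hv i
  have hwμ : f i w - μ • w =
      (f i v - μ • v) - (f i (K.starProjection v) - μ • K.starProjection v) := by
    simp only [w, map_sub, smul_sub]
    abel
  refine ⟨μ, ?_⟩
  rw [map_smul, smul_comm, ← smul_sub, hwμ]
  exact smul_mem _ _ (sub_mem hμ (sub_mem (hfK i hPv) (smul_mem _ _ hPv)))

theorem Orthonormal.snoc {𝕜 E : Type*} [RCLike 𝕜] [NormedAddCommGroup E] [InnerProductSpace 𝕜 E]
    {n : ℕ} {vs : Fin n → E} {v : E} (hvs : Orthonormal 𝕜 vs) (hv : ∀ i, ⟪vs i, v⟫_𝕜 = 0)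
    (hv1 : ‖v‖ = 1) : Orthonormal 𝕜 (Fin.snoc vs v : Fin (n + 1) → E) := by
  classical
  rw [orthonormal_iff_ite] at hvs ⊢
  intro i j
  induction i using Fin.lastCases <;> induction j using Fin.lastCases <;>
    simp [hvs, hv, inner_eq_zero_symm.mp (hv _), inner_self_eq_norm_sq_to_K, hv1,
      Fin.castSucc_ne_last, (Fin.castSucc_ne_last _).symm]

structure IsQuaternionic (J : V →ₗ⋆[ℂ] V) : Prop where
  apply_apply (v : V) : J (J v) = -v
  inner_apply_apply (x y : V) : ⟪J x, J y⟫_ℂ = conj ⟪x, y⟫_ℂ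

def quatSpan (J : V →ₗ⋆[ℂ] V) (s : Set V) : Submodule ℂ V := span ℂ (s ∪ J '' s)

theorem quatSpan_mono {J : V →ₗ⋆[ℂ] V} {s t : Set V} (h : s ⊆ t) : quatSpan J s ≤ quatSpan J t :=
  span_mono (Set.union_subset_union h (Set.image_mono h))

namespace IsQuaternionic

variable {J : V →ₗ⋆[ℂ] V}

theorem inner_self_apply (hJ : IsQuaternionic J) (x : V) : ⟪x, J x⟫_ℂ = 0 := by
  have h := hJ.inner_apply_apply x (J x)
  rw [hJ.apply_apply, inner_neg_right, inner_conj_symm] at h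
  rw [← inner_conj_symm, show ⟪J x, x⟫_ℂ = 0 by linear_combination (-1 / 2 : ℂ) * h, map_zero]

theorem inner_apply_map_apply (hJ : IsQuaternionic J) {f : Module.End ℂ V}
    (hf : ∀ v, f (J v) = J (f v)) (x y : V) : ⟪J x, f (J y)⟫_ℂ = conj ⟪x, f y⟫_ℂ := by
  rw [hf, hJ.inner_apply_apply]

theorem inner_apply_map (hJ : IsQuaternionic J) {f : Module.End ℂ V}
    (hf : ∀ v, f (J v) = J (f v)) (x y : V) : ⟪J x, f y⟫_ℂ = -conj ⟪x, f (J y)⟫_ℂ := by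
  rw [← hJ.inner_apply_map_apply hf, hJ.apply_apply, map_neg, inner_neg_right, neg_neg]

theorem apply_mem_orthogonal (hJ : IsQuaternionic J) {K : Submodule ℂ V} (hK : K ≤ K.comap J)
    {w : V} (hw : w ∈ Kᗮ) : J w ∈ Kᗮ := by
  intro u hu
  rw [← neg_neg u, ← hJ.apply_apply u, inner_neg_left, hJ.inner_apply_apply,
    hw _ (hK hu), map_zero, neg_zero]

theorem quatSpan_le_comap (hJ : IsQuaternionic J) (s : Set V) :
    quatSpan J s ≤ (quatSpan J s).comap J := by
  refine span_le.mpr ?_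
  rintro _ (hv | ⟨v, hv, rfl⟩)
  · exact subset_span (Or.inr ⟨_, hv, rfl⟩)
  · rw [SetLike.mem_coe, mem_comap, hJ.apply_apply]
    exact neg_mem (subset_span (Or.inl hv))

theorem orthonormal_sum_elim_iff (hJ : IsQuaternionic J) {ι : Type*} {e : ι → V} :
    Orthonormal ℂ (Sum.elim e (J ∘ e)) ↔ Orthonormal ℂ e ∧ ∀ i j, ⟪e i, J (e j)⟫_ℂ = 0 := by
  classical
  simp only [orthonormal_iff_ite, Sum.forall, Sum.elim_inl, Sum.elim_inr, Function.comp_apply,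
    hJ.inner_apply_apply, Sum.inl.injEq, Sum.inr.injEq, reduceCtorEq, if_false, forall_and]
  refine ⟨fun h => ⟨h.1.1, h.2.1⟩, fun ⟨h1, h2⟩ => ⟨⟨h1, fun i j => ?_⟩, h2, fun i j => ?_⟩⟩
  · rw [← inner_conj_symm, h2, map_zero]
  · rw [h1]
    split_ifs <;> simp

end IsQuaternionic

structure IsQuatSchurFrame (J : V →ₗ⋆[ℂ] V) {ι : Type*} (f : ι → Module.End ℂ V) {m : ℕ}
    (e : Fin m → V) : Prop where
  orthonormal : Orthonormal ℂ (Sum.elim e (J ∘ e))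
  exists_apply_sub_smul_mem (i : ι) (q : Fin m) :
    ∃ μ : ℂ, f i (e q) - μ • e q ∈ quatSpan J (e '' Set.Iio q)

namespace IsQuatSchurFrame

variable {J : V →ₗ⋆[ℂ] V} {ι : Type*} {f : ι → Module.End ℂ V} {m : ℕ} {e : Fin m → V}

theorem finrank_quatSpan_range (he : IsQuatSchurFrame J f e) :
    finrank ℂ (quatSpan J (Set.range e)) = 2 * m := by
  rw [quatSpan, ← Set.range_comp, ← Set.Sum.elim_range,
    finrank_span_eq_card he.orthonormal.linearIndependent]
  simp [two_mul]

theorem quatSpan_range_le_comap (hJ : IsQuaternionic J) (hfJ : ∀ i v, f i (J v) = J (f i v))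
    (he : IsQuatSchurFrame J f e) (i : ι) :
    quatSpan J (Set.range e) ≤ (quatSpan J (Set.range e)).comap (f i) := by
  have hfe (q : Fin m) : f i (e q) ∈ quatSpan J (Set.range e) := by
    obtain ⟨μ, hμ⟩ := he.exists_apply_sub_smul_mem i q
    simpa using add_mem (quatSpan_mono (Set.image_subset_range _ _) hμ)
      (smul_mem _ μ (subset_span (Or.inl ⟨q, rfl⟩)))
  refine span_le.mpr ?_
  rintro _ (⟨q, rfl⟩ | ⟨_, ⟨q, rfl⟩, rfl⟩)
  · exact hfe q
  · rw [SetLike.mem_coe, mem_comap, hfJ]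
    exact hJ.quatSpan_le_comap _ (hfe q)

theorem snoc (hJ : IsQuaternionic J) (he : IsQuatSchurFrame J f e) {ε : V}
    (hε : ε ∈ (quatSpan J (Set.range e))ᗮ) (hε1 : ‖ε‖ = 1)
    (hεf : ∀ i, ∃ μ : ℂ, f i ε - μ • ε ∈ quatSpan J (Set.range e)) :
    IsQuatSchurFrame J f (Fin.snoc e ε : Fin (m + 1) → V) := by
  have he_mem (i : Fin m) : e i ∈ quatSpan J (Set.range e) := subset_span (Or.inl ⟨i, rfl⟩)
  have hJe_mem (i : Fin m) : J (e i) ∈ quatSpan J (Set.range e) :=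
    subset_span (Or.inr ⟨e i, ⟨i, rfl⟩, rfl⟩)
  have hJε : J ε ∈ (quatSpan J (Set.range e))ᗮ :=
    hJ.apply_mem_orthogonal (hJ.quatSpan_le_comap _) hε
  have he' := hJ.orthonormal_sum_elim_iff.mp he.orthonormal
  constructor
  · refine hJ.orthonormal_sum_elim_iff.mpr ⟨he'.1.snoc (fun i => hε _ (he_mem i)) hε1, ?_⟩
    intro i j
    induction i using Fin.lastCases <;> induction j using Fin.lastCases <;>
      simp only [Fin.snoc_castSucc, Fin.snoc_last]
    · exact hJ.inner_self_apply ε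
    · exact inner_eq_zero_symm.mp (hε _ (hJe_mem _))
    · exact hJε _ (he_mem _)
    · exact he'.2 _ _
  · intro i q
    induction q using Fin.lastCases with
    | last =>
      obtain ⟨μ, hμ⟩ := hεf i
      refine ⟨μ, ?_⟩
      simp only [Fin.snoc_last]
      refine quatSpan_mono ?_ hμ
      rintro _ ⟨j, rfl⟩
      exact ⟨j.castSucc, Fin.castSucc_lt_last j, Fin.snoc_castSucc ..⟩
    | cast q =>
      obtain ⟨μ, hμ⟩ := he.exists_apply_sub_smul_mem i q
      refine ⟨μ, ?_⟩
      simp only [Fin.snoc_castSucc]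
      refine quatSpan_mono ?_ hμ
      rintro _ ⟨j, hj, rfl⟩
      exact ⟨j.castSucc, Fin.castSucc_lt_castSucc_iff.mpr hj, Fin.snoc_castSucc ..⟩

theorem inner_eq_zero (he : IsQuatSchurFrame J f e) {p q : Fin m} (hpq : p ≠ q) :
    ⟪e p, e q⟫_ℂ = 0 :=
  he.orthonormal.inner_eq_zero (Sum.inl_injective.ne hpq : (.inl p : Fin m ⊕ Fin m) ≠ .inl q)

theorem inner_quat_eq_zero (he : IsQuatSchurFrame J f e) (p q : Fin m) : ⟪e p, J (e q)⟫_ℂ = 0 :=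
  he.orthonormal.inner_eq_zero (Sum.inl_ne_inr : (.inl p : Fin m ⊕ Fin m) ≠ .inr q)

theorem inner_eq_zero_of_mem_quatSpan (he : IsQuatSchurFrame J f e) {p q : Fin m} (hqp : q ≤ p)
    {w : V} (hw : w ∈ quatSpan J (e '' Set.Iio q)) : ⟪e p, w⟫_ℂ = 0 := by
  refine mem_orthogonal_singleton_iff_inner_right.mp (span_le.mpr ?_ hw)
  rintro _ (⟨j, hj, rfl⟩ | ⟨_, ⟨j, hj, rfl⟩, rfl⟩) <;>
    rw [SetLike.mem_coe, mem_orthogonal_singleton_iff_inner_right]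
  exacts [he.inner_eq_zero (hj.trans_le hqp).ne', he.inner_quat_eq_zero p j]

theorem inner_apply_eq_zero (he : IsQuatSchurFrame J f e) (i : ι) {p q : Fin m} (hqp : q < p) :
    ⟪e p, f i (e q)⟫_ℂ = 0 := by
  obtain ⟨μ, hμ⟩ := he.exists_apply_sub_smul_mem i q
  rw [← sub_add_cancel (f i (e q)) (μ • e q), inner_add_right, inner_smul_right,
    he.inner_eq_zero_of_mem_quatSpan hqp.le hμ, he.inner_eq_zero hqp.ne', mul_zero, add_zero]

theorem inner_apply_quat_eq_zero (hJ : IsQuaternionic J) (hfJ : ∀ i v, f i (J v) = J (f i v))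
    (he : IsQuatSchurFrame J f e) (i : ι) {p q : Fin m} (hqp : q ≤ p) :
    ⟪e p, f i (J (e q))⟫_ℂ = 0 := by
  obtain ⟨μ, hμ⟩ := he.exists_apply_sub_smul_mem i q
  rw [hfJ, ← sub_add_cancel (f i (e q)) (μ • e q), map_add, LinearMap.map_smulₛₗ, inner_add_right,
    inner_smul_right, he.inner_eq_zero_of_mem_quatSpan hqp (hJ.quatSpan_le_comap _ hμ),
    he.inner_quat_eq_zero, mul_zero, add_zero]

end IsQuatSchurFrame

theorem exists_isQuatSchurFrame [FiniteDimensional ℂ V] {J : V →ₗ⋆[ℂ] V} (hJ : IsQuaternionic J)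
    {ι : Type*} (f : ι → Module.End ℂ V) (hf : ∀ i j, Commute (f i) (f j))
    (hfJ : ∀ i v, f i (J v) = J (f i v)) :
    ∀ m, 2 * m ≤ finrank ℂ V → ∃ e : Fin m → V, IsQuatSchurFrame J f e
  | 0, _ => ⟨Fin.elim0, Orthonormal.of_isEmpty _, fun _ q => q.elim0⟩
  | m + 1, hm => by
    obtain ⟨e, he⟩ := exists_isQuatSchurFrame hJ f hf hfJ m (by omega)
    have hK : quatSpan J (Set.range e) ≠ ⊤ := fun h => by
      have := he.finrank_quatSpan_range
      rw [h, finrank_top] at this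
      omega
    obtain ⟨ε, hε, hε1, hεf⟩ :=
      Submodule.exists_norm_eq_one_mem_orthogonal_forall_apply_sub_smul_mem hK f hf
        (he.quatSpan_range_le_comap hJ hfJ)
    exact ⟨_, he.snoc hJ hε hε1 hεf⟩

section Columns

variable {ι n : Type*} [Fintype n]

theorem Matrix.conjTranspose_mul_mul_apply_of_columns [DecidableEq n]
    (g : ι → EuclideanSpace ℂ n) (M : Matrix n n ℂ) (a b : ι) :
    ((of fun c b => g b c)ᴴ * M * of fun c b => g b c) a b = ⟪g a, toLpLin 2 2 M (g b)⟫_ℂ := by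
  rw [Matrix.mul_assoc]
  simp [Matrix.mul_apply, PiLp.inner_apply, mulVec, dotProduct, mul_comm]

theorem Matrix.transpose_mul_mul_apply_of_columns (g : ι → EuclideanSpace ℂ n)
    (M : Matrix n n ℂ) (a b : ι) :
    ((of fun c b => g b c)ᵀ * M * of fun c b => g b c) a b =
      WithLp.ofLp (g a) ⬝ᵥ (M *ᵥ WithLp.ofLp (g b)) := by
  rw [Matrix.mul_assoc]
  simp [Matrix.mul_apply, mulVec, dotProduct]

end Columns

section Symplectic

variable {N : ℕ}

theorem Zmat_transpose : (Zmat N)ᵀ = -Zmat N := by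
  simp [Zmat, fromBlocks_transpose, fromBlocks_neg]

theorem Zmat_mul_self : Zmat N * Zmat N = -1 := by
  simp [Zmat, fromBlocks_multiply, ← fromBlocks_one, fromBlocks_neg]

theorem mul_Zmat_of_conjTranspose_eq_dual {X : Matrix (Fin N ⊕ Fin N) (Fin N ⊕ Fin N) ℂ}
    (h : Xᴴ = dual X) : X * Zmat N = Zmat N * Xᴴᵀ := by
  rw [h, dual, transpose_mul, transpose_mul, transpose_neg, Zmat_transpose, transpose_transpose]
  simp only [Matrix.neg_mul, Matrix.mul_neg, neg_neg, ← Matrix.mul_assoc, Zmat_mul_self,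
    Matrix.one_mul]

noncomputable def quatConj (N : ℕ) :
    EuclideanSpace ℂ (Fin N ⊕ Fin N) →ₗ⋆[ℂ] EuclideanSpace ℂ (Fin N ⊕ Fin N) where
  toFun v := WithLp.toLp 2 (Tmap v)
  map_add' x y := by ext (i | i) <;> simp [Tmap]; ring
  map_smul' c x := by ext (i | i) <;> simp [Tmap]

theorem ofLp_quatConj (v : EuclideanSpace ℂ (Fin N ⊕ Fin N)) :
    WithLp.ofLp (quatConj N v) = -(Zmat N *ᵥ star (WithLp.ofLp v)) := by
  ext (i | i) <;> simp [quatConj, Tmap, Zmat, mulVec, dotProduct, Fintype.sum_sum_type, one_apply]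

theorem isQuaternionic_quatConj : IsQuaternionic (quatConj N) where
  apply_apply v := by ext (i | i) <;> simp [quatConj, Tmap]
  inner_apply_apply x y := by
    simp [quatConj, Tmap, PiLp.inner_apply, Fintype.sum_sum_type]
    ring

theorem toLpLin_apply_quatConj {X : Matrix (Fin N ⊕ Fin N) (Fin N ⊕ Fin N) ℂ} (h : Xᴴ = dual X)
    (v : EuclideanSpace ℂ (Fin N ⊕ Fin N)) :
    toLpLin 2 2 X (quatConj N v) = quatConj N (toLpLin 2 2 X v) := by
  apply WithLp.ofLp_injective
  rw [ofLp_toLpLin, ofLp_quatConj, ofLp_quatConj, ofLp_toLpLin, toLin'_apply, toLin'_apply,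
    mulVec_neg, mulVec_mulVec, star_mulVec, ← mulVec_transpose, mulVec_mulVec,
    mul_Zmat_of_conjTranspose_eq_dual h]

theorem dotProduct_Zmat_mulVec (x y : EuclideanSpace ℂ (Fin N ⊕ Fin N)) :
    WithLp.ofLp x ⬝ᵥ (Zmat N *ᵥ WithLp.ofLp y) = ⟪quatConj N x, y⟫_ℂ := by
  simp [quatConj, Tmap, Zmat, PiLp.inner_apply, dotProduct, mulVec, Fintype.sum_sum_type,
    one_apply, mul_comm]
  ring

noncomputable def frameMatrix (e : Fin N → EuclideanSpace ℂ (Fin N ⊕ Fin N)) :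
    Matrix (Fin N ⊕ Fin N) (Fin N ⊕ Fin N) ℂ :=
  of fun c b => Sum.elim e (quatConj N ∘ e) b c

theorem frameMatrix_mem_unitaryGroup {e : Fin N → EuclideanSpace ℂ (Fin N ⊕ Fin N)}
    (he : Orthonormal ℂ (Sum.elim e (quatConj N ∘ e))) :
    frameMatrix e ∈ unitaryGroup (Fin N ⊕ Fin N) ℂ := by
  rw [mem_unitaryGroup_iff', star_eq_conjTranspose, ← Matrix.mul_one (frameMatrix e)ᴴ]
  ext a b
  rw [frameMatrix, conjTranspose_mul_mul_apply_of_columns, toLpLin_one, LinearMap.id_apply,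
    orthonormal_iff_ite.mp he, one_apply]

theorem frameMatrix_transpose_mul_Zmat_mul {e : Fin N → EuclideanSpace ℂ (Fin N ⊕ Fin N)}
    (he : Orthonormal ℂ (Sum.elim e (quatConj N ∘ e))) :
    (frameMatrix e)ᵀ * Zmat N * frameMatrix e = Zmat N := by
  have hg := orthonormal_iff_ite.mp he
  ext a b
  rw [frameMatrix, transpose_mul_mul_apply_of_columns, dotProduct_Zmat_mulVec]
  rcases a with p | p
  · exact (hg (.inr p) b).trans (by cases b <;> simp [Zmat, one_apply, eq_comm])
  · change ⟪quatConj N (quatConj N (e p)), _⟫_ℂ = _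
    rw [isQuaternionic_quatConj.apply_apply, inner_neg_left]
    exact congrArg _ (hg (.inl p) b) |>.trans (by cases b <;> simp [Zmat, one_apply])

theorem frameMatrix_conjTranspose_mul_mul {X : Matrix (Fin N ⊕ Fin N) (Fin N ⊕ Fin N) ℂ}
    (hX : ∀ v, toLpLin 2 2 X (quatConj N v) = quatConj N (toLpLin 2 2 X v))
    (e : Fin N → EuclideanSpace ℂ (Fin N ⊕ Fin N)) :
    (frameMatrix e)ᴴ * X * frameMatrix e =
      fromBlocks (of fun p q => ⟪e p, toLpLin 2 2 X (e q)⟫_ℂ)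
        (of fun p q => ⟪e p, toLpLin 2 2 X (quatConj N (e q))⟫_ℂ)
        (-(of fun p q => ⟪e p, toLpLin 2 2 X (quatConj N (e q))⟫_ℂ).map conj)
        ((of fun p q => ⟪e p, toLpLin 2 2 X (e q)⟫_ℂ).map conj) := by
  ext (p | p) (q | q) <;> rw [frameMatrix, conjTranspose_mul_mul_apply_of_columns]
  · rfl
  · rfl
  · exact isQuaternionic_quatConj.inner_apply_map hX _ _
  · exact isQuaternionic_quatConj.inner_apply_map_apply hX _ _

end Symplectic

theorem quaternionic_schur {N k : ℕ} (X : Fin k → Matrix (Fin N ⊕ Fin N) (Fin N ⊕ Fin N) ℂ)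
    (hcomm : ∀ i j, Commute (X i) (X j)) (hq : ∀ j, (X j)ᴴ = dual (X j)) :
    ∃ U : Matrix (Fin N ⊕ Fin N) (Fin N ⊕ Fin N) ℂ,
      U ∈ Matrix.unitaryGroup (Fin N ⊕ Fin N) ℂ ∧
      Uᵀ * Zmat N * U = Zmat N ∧
      ∀ j, ∃ T S : Matrix (Fin N) (Fin N) ℂ,
        (∀ p q : Fin N, q < p → T p q = 0) ∧
        (∀ p q : Fin N, q ≤ p → S p q = 0) ∧
        Uᴴ * X j * U =
          Matrix.fromBlocks T S (-(S.map (starRingEnd ℂ))) (T.map (starRingEnd ℂ)) := by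
  let f (j : Fin k) : Module.End ℂ (EuclideanSpace ℂ (Fin N ⊕ Fin N)) := toLpLin 2 2 (X j)
  have hf (i j : Fin k) : Commute (f i) (f j) := (hcomm i j).map (toLpLinAlgEquiv 2)
  have hfJ (j : Fin k) (v) : f j (quatConj N v) = quatConj N (f j v) :=
    toLpLin_apply_quatConj (hq j) v
  obtain ⟨e, he⟩ := exists_isQuatSchurFrame isQuaternionic_quatConj f hf hfJ N
    (by simp [finrank_euclideanSpace, two_mul])
  refine ⟨frameMatrix e, frameMatrix_mem_unitaryGroup he.orthonormal,
    frameMatrix_transpose_mul_Zmat_mul he.orthonormal, fun j => ⟨_, _, fun p q hqp => ?_,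
      fun p q hqp => ?_, frameMatrix_conjTranspose_mul_mul (hfJ j) e⟩⟩
  · exact he.inner_apply_eq_zero j hqp
  · exact he.inner_apply_quat_eq_zero isQuaternionic_quatConj hfJ j hqp
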